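/- arXiv:2501.06384 — 5 statements merged into one kernel-verified Lean document; each statement's English description precedes it below -/
import Mathlib

section
/- Let ξ₁, ξ₂ be nonzero vectors in ℝⁿ with |ξ₁| ≤ |ξ₂| and let s ≤ 0. Then |(|ξ₁|^(2s) - |ξ₂|^(2s))/(|ξ₁|² - |ξ₂|²)| ≤ (1 + |s|) · |ξ₁|^(2s)/|ξ₂|², where the quotient is interpreted as a limit when |ξ₁| = |ξ₂|. -/
lemma key_aux (x t : ℝ) (hx : 0 < x) (hx1 : x ≤ 1) (ht : 0 ≤ t) :
    1 - x ^ t ≤ (1 + t) * (1 - x) := by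
  rcases le_total t 1 with h | h
  · have hxx : x ≤ x ^ t := by
      calc x = x ^ (1 : ℝ) := (Real.rpow_one x).symm
        _ ≤ x ^ t := Real.rpow_le_rpow_of_exponent_ge hx hx1 h
    nlinarith
  · have hb : 1 + t * (x - 1) ≤ (1 + (x - 1)) ^ t :=
      one_add_mul_self_le_rpow_one_add (by linarith) h
    have hxe : (1 + (x - 1)) = x := by ring
    rw [hxe] at hb
    nlinarith

/-- Kernel bound, `s ≤ 0` case: for nonzero `ξ₁, ξ₂ ∈ ℝⁿ` with `|ξ₁| ≤ |ξ₂|`,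
`|(|ξ₁|^(2s) - |ξ₂|^(2s))/(|ξ₁|² - |ξ₂|²)| ≤ (1+|s|)|ξ₁|^(2s)/|ξ₂|²`, the quotient
being interpreted as the derivative value `s|ξ₂|^(2s-2)` on the diagonal. -/
theorem stmt2 (n : ℕ) (ξ₁ ξ₂ : EuclideanSpace ℝ (Fin n))
    (h₁ : ξ₁ ≠ 0) (h₂ : ξ₂ ≠ 0) (hle : ‖ξ₁‖ ≤ ‖ξ₂‖) (s : ℝ) (hs : s ≤ 0) :
    |if ‖ξ₁‖ = ‖ξ₂‖ then s * ‖ξ₂‖ ^ (2 * s - 2)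
      else (‖ξ₁‖ ^ (2 * s) - ‖ξ₂‖ ^ (2 * s)) / (‖ξ₁‖ ^ 2 - ‖ξ₂‖ ^ 2)|
      ≤ (1 + |s|) * ‖ξ₁‖ ^ (2 * s) / ‖ξ₂‖ ^ 2 := by
  have ha : 0 < ‖ξ₁‖ := norm_pos_iff.mpr h₁
  have hb : 0 < ‖ξ₂‖ := norm_pos_iff.mpr h₂
  set a := ‖ξ₁‖ with hadef
  set b := ‖ξ₂‖ with hbdef
  have hA : 0 < a ^ (2 * s) := Real.rpow_pos_of_pos ha _
  have hB : 0 < b ^ (2 * s) := Real.rpow_pos_of_pos hb _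
  have habs : |s| = -s := abs_of_nonpos hs
  have hb2 : (0 : ℝ) < b ^ 2 := by positivity
  by_cases h : a = b
  · rw [if_pos h]
    have hsplit : b ^ (2 * s - 2) = b ^ (2 * s) / b ^ 2 := by
      rw [show (2 * s - 2 : ℝ) = 2 * s - (2 : ℕ) by norm_num,
        Real.rpow_sub hb, Real.rpow_natCast]
    rw [abs_mul, abs_of_pos (Real.rpow_pos_of_pos hb _), hsplit, h, habs]
    rw [mul_div_assoc]
    have hpos : (0 : ℝ) ≤ b ^ (2 * s) / b ^ 2 := by positivity
    nlinarith
  · rw [if_neg h]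
    have hab : a < b := lt_of_le_of_ne hle h
    have hBA : b ^ (2 * s) ≤ a ^ (2 * s) :=
      Real.rpow_le_rpow_of_nonpos ha hle (by linarith)
    have hden : a ^ 2 - b ^ 2 < 0 := by nlinarith
    have hq : |(a ^ (2 * s) - b ^ (2 * s)) / (a ^ 2 - b ^ 2)|
        = (a ^ (2 * s) - b ^ (2 * s)) / (b ^ 2 - a ^ 2) := by
      rw [abs_div, abs_of_nonneg (by linarith), abs_of_neg hden]
      ring_nf
    rw [hq, habs]
    have hxpos : 0 < a ^ 2 / b ^ 2 := by positivity
    have hxle : a ^ 2 / b ^ 2 ≤ 1 := by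
      rw [div_le_one hb2]; nlinarith
    have K := key_aux (a ^ 2 / b ^ 2) (-s) hxpos hxle (by linarith)
    have hx : (a ^ 2 / b ^ 2 : ℝ) ^ (-s) = b ^ (2 * s) / a ^ (2 * s) := by
      rw [Real.div_rpow (by positivity) (by positivity),
        ← Real.rpow_natCast a 2, ← Real.rpow_natCast b 2,
        ← Real.rpow_mul ha.le, ← Real.rpow_mul hb.le]
      push_cast
      rw [show (2 : ℝ) * -s = -(2 * s) by ring, Real.rpow_neg ha.le,
        Real.rpow_neg hb.le, div_eq_mul_inv, inv_inv]
      field_simp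
    rw [hx] at K
    have h1 : 1 - b ^ (2 * s) / a ^ (2 * s)
        = (a ^ (2 * s) - b ^ (2 * s)) / a ^ (2 * s) := by field_simp
    have h2 : 1 - a ^ 2 / b ^ 2 = (b ^ 2 - a ^ 2) / b ^ 2 := by field_simp
    rw [h1, h2, ← mul_div_assoc, div_le_div_iff₀ hA hb2] at K
    rw [div_le_div_iff₀ (by linarith) hb2]
    nlinarith
end

section
/- Let N : ℝ → ℝ be analytic near 0 with N(0) = 0, N(x) = Σ_{i ≥ 1} c_i x^i. Let μ be a finite nonnegative measure on [0, ∞) and set M = μ([0, ∞)). Then Σ_{i ≥ 1} c_i M^i = ∫₀^∞ N'(μ([0, r])) dμ(r), provided μ has no atoms (μ({r}) = 0 for every r). -/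
/-!
Write `F(r) = μ(-∞, r]`. Since `μ` has no atoms, `F` is continuous, and then the intermediate
value theorem shows that `F` pushes `μ` forward to Lebesgue measure on `(0, M]`: each sublevel
set `{F ≤ t}` with `0 ≤ t < M` is a half-line `(-∞, s]` with `F(s) = t`. Hence
`∫ i F^(i-1) dμ = ∫₀^M i x^(i-1) dx = M^i`, which is the resummed form of splitting the
`i`-fold product `μ^i` according to which coordinate is largest. Summing over `i` (the integrals
of the absolute values sum to `Σ |c_i| M^i < ∞`) gives the identity.
-/

open MeasureTheory Set Filter Topology

namespace MeasureTheory.Measure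

noncomputable def distributionFunction (μ : Measure ℝ) (r : ℝ) : ℝ := μ.real (Iic r)

variable (μ : Measure ℝ) [IsFiniteMeasure μ]

omit [IsFiniteMeasure μ] in
lemma distributionFunction_nonneg (r : ℝ) : 0 ≤ μ.distributionFunction r :=
  measureReal_nonneg

lemma distributionFunction_le_univ (r : ℝ) : μ.distributionFunction r ≤ μ.real univ :=
  measureReal_mono (subset_univ _)

lemma monotone_distributionFunction : Monotone μ.distributionFunction :=
  fun _ _ hab => measureReal_mono (Iic_subset_Iic.2 hab)

lemma measurable_distributionFunction : Measurable μ.distributionFunction :=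
  μ.monotone_distributionFunction.measurable

lemma distributionFunction_sub {a b : ℝ} (hab : a ≤ b) :
    μ.distributionFunction b - μ.distributionFunction a = μ.real (Ioc a b) := by
  rw [distributionFunction, distributionFunction, ← Iic_union_Ioc_eq_Iic hab,
    measureReal_union (Iic_disjoint_Ioc le_rfl) measurableSet_Ioc, add_sub_cancel_left]

omit [IsFiniteMeasure μ] in
lemma measureReal_Icc_eq_distributionFunction {a : ℝ} (ha : μ (Iio a) = 0) (r : ℝ) :
    μ.real (Icc a r) = μ.distributionFunction r := by
  rw [distributionFunction, ← Iic_inter_Ici, measureReal_def, measureReal_def,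
    measure_inter_conull (by rwa [compl_Ici])]

lemma tendsto_distributionFunction_atTop :
    Tendsto μ.distributionFunction atTop (𝓝 (μ.real univ)) :=
  (ENNReal.tendsto_toReal (measure_ne_top μ univ)).comp (tendsto_measure_Iic_atTop μ)

lemma tendsto_distributionFunction_atBot : Tendsto μ.distributionFunction atBot (𝓝 0) := by
  have h := tendsto_measure_iInter_atBot (μ := μ) (fun r => measurableSet_Iic.nullMeasurableSet)
    monotone_Iic ⟨0, measure_ne_top μ _⟩
  rw [iInter_Iic_eq_empty_iff.2 (by simp), measure_empty] at h
  exact (ENNReal.tendsto_toReal ENNReal.zero_ne_top).comp h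

variable [NullSingletonClass μ]

lemma continuous_distributionFunction : Continuous μ.distributionFunction := by
  refine continuous_iff_continuousAt.2 fun b => tendsto_iff_dist_tendsto_zero.2 ?_
  set g : ℝ → ℝ := fun δ => μ.real (Icc (b - δ) (b + δ))
  have hg : Tendsto (fun x => g |x - b|) (𝓝 b) (𝓝 0) := by
    have hδ : Tendsto (fun x => |x - b|) (𝓝 b) (𝓝 0) := by
      simpa using ((continuous_id.sub (continuous_const (y := b))).abs.tendsto b)
    exact ((ENNReal.tendsto_toReal ENNReal.zero_ne_top).comp (tendsto_measure_Icc μ b)).comp hδ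
  refine squeeze_zero (fun _ => dist_nonneg) (fun x => ?_) hg
  rw [Real.dist_eq]
  rcases le_total x b with hxb | hbx
  · rw [abs_sub_comm, abs_of_nonneg (sub_nonneg.2 (μ.monotone_distributionFunction hxb)),
      distributionFunction_sub μ hxb, abs_of_nonpos (sub_nonpos.2 hxb)]
    exact measureReal_mono fun y hy => ⟨by linarith [hy.1], by linarith [hy.2]⟩
  · rw [abs_of_nonneg (sub_nonneg.2 (μ.monotone_distributionFunction hbx)),
      distributionFunction_sub μ hbx, abs_of_nonneg (sub_nonneg.2 hbx)]
    exact measureReal_mono fun y hy => ⟨by linarith [hy.1], by linarith [hy.2]⟩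

lemma measure_preimage_distributionFunction_Iic (t : ℝ) :
    μ (μ.distributionFunction ⁻¹' Iic t) = ENNReal.ofReal (min (μ.real univ) t) := by
  set F := μ.distributionFunction
  have hF := μ.monotone_distributionFunction
  rcases le_or_gt (μ.real univ) t with hMt | htM
  · have : F ⁻¹' Iic t = univ :=
      eq_univ_of_forall fun r => (μ.distributionFunction_le_univ r).trans hMt
    rw [this, min_eq_left hMt, ofReal_measureReal]
  by_cases hbelow : ∃ a, F a ≤ t
  · obtain ⟨b, hb⟩ : ∃ b, t < F b :=
      (μ.tendsto_distributionFunction_atTop.eventually (lt_mem_nhds htM)).exists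
    obtain ⟨s₀, hs₀⟩ :=
      mem_range_of_exists_le_of_exists_ge μ.continuous_distributionFunction hbelow ⟨b, hb.le⟩
    have hclosed : IsClosed (F ⁻¹' Iic t) :=
      isClosed_Iic.preimage μ.continuous_distributionFunction
    have hbdd : BddAbove (F ⁻¹' Iic t) :=
      ⟨b, fun r hr => (hF.reflect_lt (lt_of_le_of_lt hr hb)).le⟩
    set s := sSup (F ⁻¹' Iic t)
    have hs : F s = t := le_antisymm (hclosed.csSup_mem ⟨s₀, hs₀.le⟩ hbdd)
      (hs₀ ▸ hF (le_csSup hbdd hs₀.le))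
    have : F ⁻¹' Iic t = Iic s :=
      Set.ext fun r => ⟨fun hr => le_csSup hbdd hr, fun hr => (hF hr).trans hs.le⟩
    rw [this, min_eq_right htM.le, ← hs]
    exact (ofReal_measureReal (measure_ne_top μ _)).symm
  · push Not at hbelow
    have ht : t ≤ 0 := by
      by_contra! ht
      obtain ⟨a, ha⟩ :=
        (μ.tendsto_distributionFunction_atBot.eventually (gt_mem_nhds ht)).exists
      exact (hbelow a).not_gt ha
    have : F ⁻¹' Iic t = ∅ := eq_empty_of_forall_notMem fun r hr => (hbelow r).not_ge hr
    rw [this, measure_empty, ENNReal.ofReal_eq_zero.2 ((min_le_right _ _).trans ht)]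

theorem map_distributionFunction :
    μ.map μ.distributionFunction = volume.restrict (Ioc 0 (μ.real univ)) := by
  refine ext_of_Iic _ _ fun t => ?_
  rw [map_apply μ.measurable_distributionFunction measurableSet_Iic,
    measure_preimage_distributionFunction_Iic, restrict_apply measurableSet_Iic, inter_comm,
    Ioc_inter_Iic, Real.volume_Ioc, sub_zero]

lemma integral_comp_distributionFunction {g : ℝ → ℝ} (hg : Measurable g) :
    ∫ r, g (μ.distributionFunction r) ∂μ = ∫ x in 0..μ.real univ, g x := by
  rw [← integral_map μ.measurable_distributionFunction.aemeasurable hg.aestronglyMeasurable,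
    map_distributionFunction, intervalIntegral.integral_of_le measureReal_nonneg]

lemma integrable_comp_distributionFunction {g : ℝ → ℝ} (hg : Measurable g)
    (hgi : IntegrableOn g (Ioc 0 (μ.real univ))) :
    Integrable (g ∘ μ.distributionFunction) μ := by
  rw [← integrable_map_measure hg.aestronglyMeasurable
    μ.measurable_distributionFunction.aemeasurable, map_distributionFunction]
  exact hgi

lemma integral_deriv_monomial_comp_distributionFunction (a : ℕ → ℝ) (ha : a 0 = 0) (i : ℕ) :
    ∫ r, (i : ℝ) * a i * μ.distributionFunction r ^ (i - 1) ∂μ =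
      a i * μ.real univ ^ i := by
  rcases i with _ | n
  · simp [ha]
  rw [Nat.add_sub_cancel,
    μ.integral_comp_distributionFunction
      (g := fun x => ((n + 1 : ℕ) : ℝ) * a (n + 1) * x ^ n) (by fun_prop),
    intervalIntegral.integral_const_mul, integral_pow, zero_pow n.succ_ne_zero, sub_zero]
  push_cast
  field_simp

end MeasureTheory.Measure

theorem stmt8_general (μ : Measure ℝ) [IsFiniteMeasure μ]
    (hsupp : μ (Set.Iio 0) = 0)
    (hatom : ∀ r : ℝ, μ {r} = 0)
    (c : ℕ → ℝ) (hc0 : c 0 = 0)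
    (M : ℝ) (hM : M = (μ Set.univ).toReal)
    (hconv : Summable fun i : ℕ => |c i| * M ^ i) :
    ∑' i : ℕ, c i * M ^ i
      = ∫ r, (∑' i : ℕ, (i : ℝ) * c i * ((μ (Set.Icc 0 r)).toReal) ^ (i - 1)) ∂μ := by
  have : NullSingletonClass μ := ⟨hatom⟩
  rw [← measureReal_def] at hM
  subst hM
  simp only [← measureReal_def, μ.measureReal_Icc_eq_distributionFunction hsupp]
  set f : ℕ → ℝ → ℝ := fun i r => (i : ℝ) * c i * μ.distributionFunction r ^ (i - 1)
  have hint : ∀ i, Integrable (f i) μ := fun i =>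
    μ.integrable_comp_distributionFunction (g := fun x => (i : ℝ) * c i * x ^ (i - 1))
      (by fun_prop) (Continuous.integrableOn_Ioc (by fun_prop))
  have hnorm : ∀ i, ∫ r, ‖f i r‖ ∂μ = |c i| * μ.real univ ^ i := fun i => by
    simp only [f, norm_mul, norm_pow, Real.norm_eq_abs, Nat.abs_cast,
      abs_of_nonneg (μ.distributionFunction_nonneg _)]
    exact μ.integral_deriv_monomial_comp_distributionFunction (fun i => |c i|) (by simp [hc0]) i
  rw [← integral_tsum_of_summable_integral_norm hint (by simpa only [hnorm] using hconv)]
  exact tsum_congr fun i => (μ.integral_deriv_monomial_comp_distributionFunction c hc0 i).symm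

/-- Symmetrization identity: for `N(x) = Σ_{i≥1} c_i x^i` analytic (with convergent
series and derivative series at `M`), and `μ` a finite atomless nonnegative measure
supported on `[0,∞)` with total mass `M`, one has
`Σ_{i≥1} c_i M^i = ∫₀^∞ N'(μ([0,r])) dμ(r)`, where `N'(x) = Σ_{i≥1} i c_i x^{i-1}`. -/
theorem stmt8 (μ : Measure ℝ) [IsFiniteMeasure μ]
    (hsupp : μ (Set.Iio 0) = 0)
    (hatom : ∀ r : ℝ, μ {r} = 0)
    (c : ℕ → ℝ) (hc0 : c 0 = 0)
    (M : ℝ) (hM : M = (μ Set.univ).toReal)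
    (hconv : Summable fun i : ℕ => |c i| * M ^ i)
    (hconv' : Summable fun i : ℕ => (i : ℝ) * |c i| * M ^ (i - 1)) :
    ∑' i : ℕ, c i * M ^ i
      = ∫ r, (∑' i : ℕ, (i : ℝ) * c i * ((μ (Set.Icc 0 r)).toReal) ^ (i - 1)) ∂μ :=
  stmt8_general μ hsupp hatom c hc0 M hM hconv
end

section
/- There do not exist functions a, b, c, d, e, f : ℝ² → ℝ with a, b, e, f symmetric (i.e., a(x,y) = a(y,x), etc.) and a real σ such that for all nonzero (x, y) ∈ ℝ² the system holds: 2a(x,y) - 2b(x,y)y² - c(x,y)y² - d(x,y)x² = x^(2+2σ) y², 2a(x,y) - c(y,x)y² - d(x,y)x² - 2e(x,y)y² = 0, c(x,y) + d(x,y) + 2e(x,y) - 2f(x,y)y² = 0, and 2b(x,y) + c(y,x) + d(x,y) - 2f(x,y)y² = 0. -/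
/-- Non-cancellation for the linearized Kirchhoff system: there is no quadratic
modified energy correction.  No symmetric `a, b, e, f`, functions `c, d`, and
exponent `σ` satisfy the leading-order cancellation system for all nonzero
frequencies `x, y`. -/
theorem stmt10 :
    ¬ ∃ (a b c d e f : ℝ → ℝ → ℝ) (σ : ℝ),
      (∀ x y, a x y = a y x) ∧ (∀ x y, b x y = b y x) ∧
      (∀ x y, e x y = e y x) ∧ (∀ x y, f x y = f y x) ∧
      (∀ x y : ℝ, x ≠ 0 → y ≠ 0 →
        2 * a x y - 2 * b x y * y ^ 2 - c x y * y ^ 2 - d x y * x ^ 2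
            = x ^ (2 + 2 * σ) * y ^ 2 ∧
        2 * a x y - c y x * y ^ 2 - d x y * x ^ 2 - 2 * e x y * y ^ 2 = 0 ∧
        c x y + d x y + 2 * e x y - 2 * f x y * y ^ 2 = 0 ∧
        2 * b x y + c y x + d x y - 2 * f x y * y ^ 2 = 0) := by
  rintro ⟨a, b, c, d, e, f, σ, _, _, _, _, hsys⟩
  obtain ⟨h1, h2, h3, h4⟩ := hsys 1 1 one_ne_zero one_ne_zero
  rw [Real.one_rpow] at h1
  norm_num at h1 h2 h3 h4
  linarith
end

section
/- Let s ≥ 0 and u, v ∈ L²(ℝⁿ, ℂ) (representing û and û'). Define b(ξ₁,ξ₂) = -(1/4)|ξ₁|²|ξ₂|² (|ξ₁|^(2s) - |ξ₂|^(2s))/(|ξ₁|² - |ξ₂|²) (interpreted by the limit on the diagonal). Then |∬ b(ξ₁,ξ₂) |u(ξ₁)|² |v(ξ₂)|² dξ₁ dξ₂| ≤ (1/4)(1+s) [ (∫|ξ|²|u(ξ)|²dξ)(∫|ξ|^(2s)|v(ξ)|²dξ) + (∫|ξ|^(2+2s)|u(ξ)|²dξ)(∫|v(ξ)|²dξ)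 ], assuming all integrals on the right are finite. -/
open MeasureTheory Real

/-- Slope bound: for `0 ≤ b < a` and `s ≥ 0`, `a^s - b^s ≤ (1+s) a^{s-1} (a-b)`. -/
lemma slope_le (s : ℝ) (hs : 0 ≤ s) {a b : ℝ} (hb : 0 ≤ b) (hab : b < a) :
    a ^ s - b ^ s ≤ (1 + s) * (a ^ (s - 1) * (a - b)) := by
  have ha : 0 < a := hb.trans_lt hab
  have hA : a ^ (s - 1) * a = a ^ s := by
    rw [← Real.rpow_add_one ha.ne' (s - 1), sub_add_cancel]
  have hnn : 0 ≤ a ^ (s - 1) * (a - b) :=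
    mul_nonneg (Real.rpow_nonneg ha.le _) (by linarith)
  rcases le_or_gt 1 s with h1 | h1
  · have hz : (-1 : ℝ) ≤ b / a - 1 := by
      have : 0 ≤ b / a := div_nonneg hb ha.le
      linarith
    have hbern := one_add_mul_self_le_rpow_one_add hz h1
    rw [add_sub_cancel] at hbern
    have hd : (b / a) ^ s = b ^ s / a ^ s := Real.div_rpow hb ha.le s
    rw [hd] at hbern
    have has : (0 : ℝ) < a ^ s := Real.rpow_pos_of_pos ha s
    have hmul : (1 + s * (b / a - 1)) * a ^ s ≤ b ^ s := (le_div_iff₀ has).mp hbern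
    have h3 : b / a * a ^ s = b * a ^ (s - 1) := by
      rw [← hA]
      field_simp
    have h4 : (1 + s * (b / a - 1)) * a ^ s = a ^ s + s * (b * a ^ (s - 1)) - s * a ^ s := by
      rw [← h3]; ring
    rw [h4] at hmul
    have hA2 : s * a ^ (s - 1) * a = s * a ^ s := by rw [mul_assoc, hA]
    nlinarith [hmul, hA, hA2, hnn]
  · have hkey : a ^ (s - 1) * b ≤ b ^ s := by
      rcases eq_or_lt_of_le hb with h0 | h0
      · rw [← h0, mul_zero]; exact Real.rpow_nonneg le_rfl s
      · have hanti : a ^ (s - 1) ≤ b ^ (s - 1) :=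
          Real.rpow_le_rpow_of_nonpos h0 hab.le (by linarith)
        have hb1 : b ^ (s - 1) * b = b ^ s := by
          rw [← Real.rpow_add_one h0.ne' (s - 1), sub_add_cancel]
        calc a ^ (s - 1) * b ≤ b ^ (s - 1) * b := by
              exact mul_le_mul_of_nonneg_right hanti hb
          _ = b ^ s := hb1
    nlinarith [hkey, hA, hnn]

/-- Kernel bound in the variables `a = |ξ₁|²`, `b = |ξ₂|²`. -/
lemma ker_ab (s : ℝ) (hs : 0 ≤ s) {a b : ℝ} (ha : 0 ≤ a) (hb : 0 ≤ b) (hab : a ≠ b) :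
    a * b * |(a ^ s - b ^ s) / (a - b)| ≤ (1 + s) * (a * b ^ s + a ^ (1 + s)) := by
  have h1s : (0:ℝ) < 1 + s := by linarith
  rcases lt_or_gt_of_ne hab with h | h
  · -- a < b
    have hb0 : 0 < b := ha.trans_lt h
    have hmono : a ^ s ≤ b ^ s := Real.rpow_le_rpow ha h.le hs
    have hq : |(a ^ s - b ^ s) / (a - b)| = (b ^ s - a ^ s) / (b - a) := by
      rw [abs_div, abs_sub_comm (a ^ s), abs_sub_comm a,
        abs_of_nonneg (by linarith), abs_of_nonneg (by linarith)]
    rw [hq]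
    have hslope := slope_le s hs ha h
    have hqle : (b ^ s - a ^ s) / (b - a) ≤ (1 + s) * b ^ (s - 1) := by
      rw [div_le_iff₀ (by linarith)]
      calc b ^ s - a ^ s ≤ (1 + s) * (b ^ (s - 1) * (b - a)) := hslope
        _ = (1 + s) * b ^ (s - 1) * (b - a) := by ring
    have hbb : b ^ (s - 1) * b = b ^ s := by
      rw [← Real.rpow_add_one hb0.ne' (s - 1), sub_add_cancel]
    have := mul_le_mul_of_nonneg_left hqle (mul_nonneg ha hb)
    calc a * b * ((b ^ s - a ^ s) / (b - a)) ≤ a * b * ((1 + s) * b ^ (s - 1)) := this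
      _ = (1 + s) * (a * (b ^ (s - 1) * b)) := by ring
      _ = (1 + s) * (a * b ^ s) := by rw [hbb]
      _ ≤ (1 + s) * (a * b ^ s + a ^ (1 + s)) := by
          nlinarith [Real.rpow_nonneg ha (1 + s)]
  · -- b < a
    have ha0 : 0 < a := hb.trans_lt h
    have hmono : b ^ s ≤ a ^ s := Real.rpow_le_rpow hb h.le hs
    have hq : |(a ^ s - b ^ s) / (a - b)| = (a ^ s - b ^ s) / (a - b) := by
      rw [abs_div, abs_of_nonneg (by linarith), abs_of_nonneg (by linarith)]
    rw [hq]
    have hslope := slope_le s hs hb h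
    have hqle : (a ^ s - b ^ s) / (a - b) ≤ (1 + s) * a ^ (s - 1) := by
      rw [div_le_iff₀ (by linarith)]
      calc a ^ s - b ^ s ≤ (1 + s) * (a ^ (s - 1) * (a - b)) := hslope
        _ = (1 + s) * a ^ (s - 1) * (a - b) := by ring
    have haa : a ^ (s - 1) * a = a ^ s := by
      rw [← Real.rpow_add_one ha0.ne' (s - 1), sub_add_cancel]
    have haa2 : a ^ s * a = a ^ (1 + s) := by
      rw [add_comm, ← Real.rpow_add_one ha0.ne' s]
    have := mul_le_mul_of_nonneg_left hqle (mul_nonneg ha hb)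
    calc a * b * ((a ^ s - b ^ s) / (a - b)) ≤ a * b * ((1 + s) * a ^ (s - 1)) := this
      _ = (1 + s) * (b * (a ^ (s - 1) * a)) := by ring
      _ = (1 + s) * (b * a ^ s) := by rw [haa]
      _ ≤ (1 + s) * (a * a ^ s) := by
          nlinarith [Real.rpow_nonneg ha0.le s, mul_le_mul_of_nonneg_right h.le (Real.rpow_nonneg ha0.le s)]
      _ = (1 + s) * a ^ (1 + s) := by rw [mul_comm a (a ^ s), haa2]
      _ ≤ (1 + s) * (a * b ^ s + a ^ (1 + s)) := by
          nlinarith [mul_nonneg ha (Real.rpow_nonneg hb s)]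

/-- Pointwise kernel bound. -/
lemma ker_xy (s : ℝ) (hs : 0 ≤ s) {x y : ℝ} (hx : 0 ≤ x) (hy : 0 ≤ y) :
    x ^ 2 * y ^ 2 * |if x = y then s * y ^ (2 * s - 2)
        else (x ^ (2 * s) - y ^ (2 * s)) / (x ^ 2 - y ^ 2)| ≤
      (1 + s) * (x ^ 2 * y ^ (2 * s) + x ^ (2 + 2 * s)) := by
  have hxs : x ^ (2 * s) = (x ^ 2 : ℝ) ^ s := by
    rw [Real.rpow_mul hx, Real.rpow_two]
  have hys : y ^ (2 * s) = (y ^ 2 : ℝ) ^ s := by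
    rw [Real.rpow_mul hy, Real.rpow_two]
  have hx2s : x ^ (2 + 2 * s) = (x ^ 2 : ℝ) ^ (1 + s) := by
    have : (2 : ℝ) + 2 * s = 2 * (1 + s) := by ring
    rw [this, Real.rpow_mul hx, Real.rpow_two]
  by_cases hxy : x = y
  · subst hxy
    rw [if_pos rfl]
    rcases eq_or_lt_of_le hx with h0 | h0
    · rw [← h0]
      have : ((0:ℝ) ^ 2 : ℝ) = 0 := by norm_num
      rw [this]
      simp only [zero_mul, mul_zero]
      positivity
    · have hyy : (x ^ 2 : ℝ) * x ^ (2 * s - 2) = x ^ (2 * s) := by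
        rw [← Real.rpow_two, ← Real.rpow_add h0]
        ring_nf
      have habs : |s * x ^ (2 * s - 2)| = s * x ^ (2 * s - 2) :=
        abs_of_nonneg (mul_nonneg hs (Real.rpow_nonneg hx _))
      rw [habs]
      have : x ^ 2 * x ^ 2 * (s * x ^ (2 * s - 2)) = s * (x ^ 2 * (x ^ 2 * x ^ (2 * s - 2))) := by
        ring
      rw [this, hyy]
      nlinarith [mul_nonneg (sq_nonneg x) (Real.rpow_nonneg hx (2 * s)),
        Real.rpow_nonneg hx (2 + 2 * s), sq_nonneg x]
  · have hab : (x ^ 2 : ℝ) ≠ y ^ 2 := by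
      intro h
      exact hxy (by nlinarith [sq_nonneg (x - y), sq_nonneg (x + y)])
    have := ker_ab s hs (a := x ^ 2) (b := y ^ 2) (sq_nonneg x) (sq_nonneg y) hab
    rw [if_neg hxy, hxs, hys, hx2s]
    exact this

/-- The `b`-term estimate: with
`b(ξ₁,ξ₂) = -(1/4)|ξ₁|²|ξ₂|²(|ξ₁|^{2s} - |ξ₂|^{2s})/(|ξ₁|² - |ξ₂|²)`
(diagonal interpreted as the derivative value), the double integral
`∬ b |u(ξ₁)|² |v(ξ₂)|²` is bounded by
`(1/4)(1+s)[(∫|ξ|²|u|²)(∫|ξ|^{2s}|v|²) + (∫|ξ|^{2+2s}|u|²)(∫|v|²)]`. -/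
theorem stmt14 (n : ℕ) (s : ℝ) (hs : 0 ≤ s)
    (u v : EuclideanSpace ℝ (Fin n) → ℂ)
    (hu : Measurable u) (hv : Measurable v)
    (hu2 : Integrable (fun ξ => ‖ξ‖ ^ 2 * ‖u ξ‖ ^ 2) volume)
    (hu2s : Integrable (fun ξ => ‖ξ‖ ^ (2 + 2 * s) * ‖u ξ‖ ^ 2) volume)
    (hv2s : Integrable (fun ξ => ‖ξ‖ ^ (2 * s) * ‖v ξ‖ ^ 2) volume)
    (hv0 : Integrable (fun ξ => ‖v ξ‖ ^ 2) volume) :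
    |∫ ξ₁, ∫ ξ₂,
        (-(1 / 4) * ‖ξ₁‖ ^ 2 * ‖ξ₂‖ ^ 2 *
          (if ‖ξ₁‖ = ‖ξ₂‖ then s * ‖ξ₂‖ ^ (2 * s - 2)
            else (‖ξ₁‖ ^ (2 * s) - ‖ξ₂‖ ^ (2 * s)) / (‖ξ₁‖ ^ 2 - ‖ξ₂‖ ^ 2)))
          * ‖u ξ₁‖ ^ 2 * ‖v ξ₂‖ ^ 2|
      ≤ (1 / 4) * (1 + s) *
        ((∫ ξ, ‖ξ‖ ^ 2 * ‖u ξ‖ ^ 2) * (∫ ξ, ‖ξ‖ ^ (2 * s) * ‖v ξ‖ ^ 2)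
          + (∫ ξ, ‖ξ‖ ^ (2 + 2 * s) * ‖u ξ‖ ^ 2) * (∫ ξ, ‖v ξ‖ ^ 2)) := by
  set A := ∫ ξ, ‖ξ‖ ^ (2 * s) * ‖v ξ‖ ^ 2 with hA
  set B := ∫ ξ, ‖v ξ‖ ^ 2 with hB
  set F : EuclideanSpace ℝ (Fin n) → EuclideanSpace ℝ (Fin n) → ℝ := fun ξ₁ ξ₂ =>
    (-(1 / 4) * ‖ξ₁‖ ^ 2 * ‖ξ₂‖ ^ 2 *
      (if ‖ξ₁‖ = ‖ξ₂‖ then s * ‖ξ₂‖ ^ (2 * s - 2)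
        else (‖ξ₁‖ ^ (2 * s) - ‖ξ₂‖ ^ (2 * s)) / (‖ξ₁‖ ^ 2 - ‖ξ₂‖ ^ 2)))
      * ‖u ξ₁‖ ^ 2 * ‖v ξ₂‖ ^ 2 with hF
  set G : EuclideanSpace ℝ (Fin n) → EuclideanSpace ℝ (Fin n) → ℝ := fun ξ₁ ξ₂ =>
    (1 / 4) * (1 + s) *
      ((‖ξ₁‖ ^ 2 * ‖u ξ₁‖ ^ 2) * (‖ξ₂‖ ^ (2 * s) * ‖v ξ₂‖ ^ 2)
        + (‖ξ₁‖ ^ (2 + 2 * s) * ‖u ξ₁‖ ^ 2) * ‖v ξ₂‖ ^ 2) with hG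
  set H : EuclideanSpace ℝ (Fin n) → ℝ := fun ξ₁ =>
    (1 / 4) * (1 + s) *
      ((‖ξ₁‖ ^ 2 * ‖u ξ₁‖ ^ 2) * A + (‖ξ₁‖ ^ (2 + 2 * s) * ‖u ξ₁‖ ^ 2) * B) with hH
  -- pointwise bound
  have hFG : ∀ ξ₁ ξ₂, |F ξ₁ ξ₂| ≤ G ξ₁ ξ₂ := by
    intro ξ₁ ξ₂
    have hU : (0:ℝ) ≤ ‖u ξ₁‖ ^ 2 := sq_nonneg _
    have hV : (0:ℝ) ≤ ‖v ξ₂‖ ^ 2 := sq_nonneg _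
    have hk := ker_xy s hs (norm_nonneg ξ₁) (norm_nonneg ξ₂)
    have h1 : |F ξ₁ ξ₂| = 1 / 4 * (‖ξ₁‖ ^ 2 * ‖ξ₂‖ ^ 2 *
        |if ‖ξ₁‖ = ‖ξ₂‖ then s * ‖ξ₂‖ ^ (2 * s - 2)
          else (‖ξ₁‖ ^ (2 * s) - ‖ξ₂‖ ^ (2 * s)) / (‖ξ₁‖ ^ 2 - ‖ξ₂‖ ^ 2)|)
        * (‖u ξ₁‖ ^ 2 * ‖v ξ₂‖ ^ 2) := by
      simp only [hF, abs_mul]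
      rw [abs_of_nonneg (sq_nonneg (‖ξ₁‖ : ℝ)), abs_of_nonneg (sq_nonneg (‖ξ₂‖ : ℝ)),
        abs_of_nonneg hU, abs_of_nonneg hV]
      have : |(-(1 / 4) : ℝ)| = 1 / 4 := by norm_num
      rw [this]; ring
    rw [h1]
    have h2 := mul_le_mul_of_nonneg_right
      (mul_le_mul_of_nonneg_left hk (by norm_num : (0:ℝ) ≤ 1 / 4))
      (mul_nonneg hU hV)
    calc 1 / 4 * (‖ξ₁‖ ^ 2 * ‖ξ₂‖ ^ 2 * |_|) * (‖u ξ₁‖ ^ 2 * ‖v ξ₂‖ ^ 2)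
        ≤ 1 / 4 * ((1 + s) * (‖ξ₁‖ ^ 2 * ‖ξ₂‖ ^ (2 * s) + ‖ξ₁‖ ^ (2 + 2 * s)))
          * (‖u ξ₁‖ ^ 2 * ‖v ξ₂‖ ^ 2) := h2
      _ = G ξ₁ ξ₂ := by simp only [hG]; ring
  -- integrability of the comparison functions
  have hGint : ∀ ξ₁, Integrable (fun ξ₂ => G ξ₁ ξ₂) volume := by
    intro ξ₁
    exact (((hv2s.const_mul (‖ξ₁‖ ^ 2 * ‖u ξ₁‖ ^ 2)).add
      (hv0.const_mul (‖ξ₁‖ ^ (2 + 2 * s) * ‖u ξ₁‖ ^ 2))).const_mul ((1 / 4) * (1 + s)))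
  have hGval : ∀ ξ₁, (∫ ξ₂, G ξ₁ ξ₂) = H ξ₁ := by
    intro ξ₁
    simp only [hG, hH]
    rw [integral_const_mul, integral_add (hv2s.const_mul _) (hv0.const_mul _),
      integral_const_mul, integral_const_mul]
  have hinner : ∀ ξ₁, |∫ ξ₂, F ξ₁ ξ₂| ≤ H ξ₁ := by
    intro ξ₁
    calc |∫ ξ₂, F ξ₁ ξ₂| = ‖∫ ξ₂, F ξ₁ ξ₂‖ := (Real.norm_eq_abs _).symm
      _ ≤ ∫ ξ₂, ‖F ξ₁ ξ₂‖ := norm_integral_le_integral_norm _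
      _ ≤ ∫ ξ₂, G ξ₁ ξ₂ := by
          refine integral_mono_of_nonneg (ae_of_all _ fun ξ₂ => norm_nonneg _)
            (hGint ξ₁) (ae_of_all _ fun ξ₂ => ?_)
          simpa [Real.norm_eq_abs] using hFG ξ₁ ξ₂
      _ = H ξ₁ := hGval ξ₁
  have hHint : Integrable H volume :=
    (((hu2.mul_const A).add (hu2s.mul_const B)).const_mul ((1 / 4) * (1 + s)))
  have hHval : (∫ ξ₁, H ξ₁) = (1 / 4) * (1 + s) *
      ((∫ ξ, ‖ξ‖ ^ 2 * ‖u ξ‖ ^ 2) * A + (∫ ξ, ‖ξ‖ ^ (2 + 2 * s) * ‖u ξ‖ ^ 2) * B) := by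
    simp only [hH]
    rw [integral_const_mul, integral_add (hu2.mul_const A) (hu2s.mul_const B),
      integral_mul_const, integral_mul_const]
  calc |∫ ξ₁, ∫ ξ₂, F ξ₁ ξ₂| = ‖∫ ξ₁, ∫ ξ₂, F ξ₁ ξ₂‖ := (Real.norm_eq_abs _).symm
    _ ≤ ∫ ξ₁, ‖∫ ξ₂, F ξ₁ ξ₂‖ := norm_integral_le_integral_norm _
    _ ≤ ∫ ξ₁, H ξ₁ := by
        refine integral_mono_of_nonneg (ae_of_all _ fun ξ₁ => norm_nonneg _)
          hHint (ae_of_all _ fun ξ₁ => ?_)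
        simpa [Real.norm_eq_abs] using hinner ξ₁
    _ = _ := hHval
end

section
/- Let s ≥ 0 and let φ, ψ : ℝⁿ → ℝ be measurable with the integrals below finite. With c(ξ₁,ξ₂) = (1/4)|ξ₁|²|ξ₂|² (|ξ₁|^(2s) - |ξ₂|^(2s))/(|ξ₁|² - |ξ₂|²), one has |∬ c(ξ₁,ξ₂) φ(ξ₁) φ(ξ₂) dξ₁dξ₂| ≤ (1/2)(1+s) (∫ |ξ| |φ(ξ)| dξ)(∫ |ξ|^(2s+1) |φ(ξ)| dξ) whenever φ is integrable against the weights |ξ| and |ξ|^(2s+1). -/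
open MeasureTheory Real

private lemma key_ineq (s : ℝ) (hs : 0 ≤ s) {t : ℝ} (ht0 : 0 < t) (ht1 : t ≤ 1) :
    1 - t ^ s ≤ (1 + s) * (1 - t) := by
  rcases le_or_gt s 1 with h1 | h1
  · have : t ^ (1:ℝ) ≤ t ^ s := Real.rpow_le_rpow_of_exponent_ge ht0 ht1 h1
    rw [Real.rpow_one] at this
    nlinarith
  · have hb : -1 ≤ t - 1 := by linarith
    have := one_add_mul_self_le_rpow_one_add hb h1.le
    rw [show (1 : ℝ) + (t - 1) = t by ring] at this
    nlinarith

private lemma milemma (s : ℝ) (hs : 0 ≤ s) {a b : ℝ} (ha : 0 < a) (hab : a < b) :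
    (b ^ (2 * s) - a ^ (2 * s)) / (b ^ 2 - a ^ 2) ≤ (1 + s) * b ^ (2 * s - 2) := by
  have hb : 0 < b := ha.trans hab
  have hden : (0:ℝ) < b ^ 2 - a ^ 2 := by nlinarith
  rw [div_le_iff₀ hden]
  have ht0 : 0 < a ^ 2 / b ^ 2 := by positivity
  have ht1 : a ^ 2 / b ^ 2 ≤ 1 := by
    rw [div_le_one (by positivity)]; nlinarith
  have hk := key_ineq s hs ht0 ht1
  have e1 : (a ^ 2 / b ^ 2) ^ s = a ^ (2 * s) / b ^ (2 * s) := by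
    rw [Real.div_rpow (by positivity) (by positivity)]
    rw [← Real.rpow_natCast a 2, ← Real.rpow_natCast b 2,
      ← Real.rpow_mul ha.le, ← Real.rpow_mul hb.le]
    norm_num
  have hbs : (0:ℝ) < b ^ (2 * s) := Real.rpow_pos_of_pos hb _
  have e2 : b ^ (2 * s - 2) * b ^ 2 = b ^ (2 * s) := by
    rw [← Real.rpow_natCast b 2, ← Real.rpow_add hb]
    norm_num
  -- multiply key inequality by b^(2s)
  have hk2 : b ^ (2 * s) * (1 - (a ^ 2 / b ^ 2) ^ s) ≤
      b ^ (2 * s) * ((1 + s) * (1 - a ^ 2 / b ^ 2)) :=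
    mul_le_mul_of_nonneg_left hk hbs.le
  rw [e1] at hk2
  have hb2 : (0:ℝ) < b ^ 2 := by positivity
  have e3 : b ^ (2 * s) * (1 - a ^ (2 * s) / b ^ (2 * s)) = b ^ (2 * s) - a ^ (2 * s) := by
    field_simp
  have e4 : b ^ (2 * s) * ((1 + s) * (1 - a ^ 2 / b ^ 2)) =
      (1 + s) * b ^ (2 * s - 2) * (b ^ 2 - a ^ 2) := by
    rw [← e2]; field_simp
  rw [e3, e4] at hk2
  exact hk2

private lemma kbd (s : ℝ) (hs : 0 ≤ s) (a b : ℝ) (ha : 0 ≤ a) (hb : 0 ≤ b) :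
    |(1 / 4) * a ^ 2 * b ^ 2 *
        (if a = b then s * b ^ (2 * s - 2)
          else (a ^ (2 * s) - b ^ (2 * s)) / (a ^ 2 - b ^ 2))| ≤
      (1 / 4) * (1 + s) * (a * b ^ (2 * s + 1) + a ^ (2 * s + 1) * b) := by
  have hRH : 0 ≤ (1 / 4) * (1 + s) * (a * b ^ (2 * s + 1) + a ^ (2 * s + 1) * b) := by
    have := Real.rpow_nonneg hb (2 * s + 1)
    have := Real.rpow_nonneg ha (2 * s + 1)
    positivity
  rcases eq_or_lt_of_le ha with rfl | ha0
  · simp only [ne_eq, OfNat.ofNat_ne_zero, not_false_eq_true, zero_pow, mul_zero, zero_mul,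
      abs_zero]
    simpa using hRH
  rcases eq_or_lt_of_le hb with rfl | hb0
  · simp only [ne_eq, OfNat.ofNat_ne_zero, not_false_eq_true, zero_pow, mul_zero, zero_mul,
      abs_zero]
    simpa using hRH
  by_cases hab : a = b
  · subst hab
    rw [if_pos rfl]
    have e : a ^ 2 * a ^ 2 * a ^ (2 * s - 2) = a ^ (2 * s + 2) := by
      rw [← Real.rpow_natCast a 2, ← Real.rpow_add ha0, ← Real.rpow_add ha0]
      congr 1
      push_cast; ring
    have e' : a ^ (2 * s + 2) = a * a ^ (2 * s + 1) := by
      rw [show (2 * s + 2) = 1 + (2 * s + 1) from by ring, Real.rpow_add ha0,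
        Real.rpow_one]
    have hA : (0:ℝ) ≤ a ^ (2 * s + 2) := Real.rpow_nonneg ha _
    have e'' : s * (a ^ 2 * a ^ 2 * a ^ (2 * s - 2)) = s * a ^ (2 * s + 2) := by rw [e]
    rw [abs_of_nonneg (by
      have := Real.rpow_nonneg ha (2 * s - 2); positivity)]
    nlinarith [e'', e', hA, hs, mul_nonneg hs hA]
  · -- a ≠ b
    have main : ∀ x y : ℝ, 0 < x → x < y →
        |(1 / 4) * x ^ 2 * y ^ 2 * ((x ^ (2 * s) - y ^ (2 * s)) / (x ^ 2 - y ^ 2))| ≤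
          (1 / 4) * (1 + s) * (x * y ^ (2 * s + 1) + x ^ (2 * s + 1) * y) := by
      intro x y hx hxy
      have hy : 0 < y := hx.trans hxy
      have hfrac : (x ^ (2 * s) - y ^ (2 * s)) / (x ^ 2 - y ^ 2) =
          (y ^ (2 * s) - x ^ (2 * s)) / (y ^ 2 - x ^ 2) := by
        rw [← neg_div_neg_eq]; ring_nf
      have hnum : 0 ≤ y ^ (2 * s) - x ^ (2 * s) := by
        have : x ^ (2 * s) ≤ y ^ (2 * s) :=
          Real.rpow_le_rpow hx.le hxy.le (by positivity)
        linarith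
      have hden : (0:ℝ) < y ^ 2 - x ^ 2 := by nlinarith
      have hfr0 : 0 ≤ (y ^ (2 * s) - x ^ (2 * s)) / (y ^ 2 - x ^ 2) := by positivity
      rw [hfrac, abs_of_nonneg (by positivity)]
      have hmi := milemma s hs hx hxy
      have step1 : (1 / 4) * x ^ 2 * y ^ 2 * ((y ^ (2 * s) - x ^ (2 * s)) / (y ^ 2 - x ^ 2)) ≤
          (1 / 4) * x ^ 2 * y ^ 2 * ((1 + s) * y ^ (2 * s - 2)) := by
        have h1 : (0:ℝ) ≤ (1 / 4) * x ^ 2 * y ^ 2 := by positivity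
        exact mul_le_mul_of_nonneg_left hmi h1
      have e2 : y ^ (2 * s - 2) * y ^ 2 = y ^ (2 * s) := by
        rw [← Real.rpow_natCast y 2, ← Real.rpow_add hy]; norm_num
      have e3 : y * y ^ (2 * s) = y ^ (2 * s + 1) := by
        rw [show (2 * s + 1) = 1 + 2 * s from by ring, Real.rpow_add hy, Real.rpow_one]
      have hys : 0 ≤ y ^ (2 * s) := Real.rpow_nonneg hy.le _
      have step2 : (1 / 4) * x ^ 2 * y ^ 2 * ((1 + s) * y ^ (2 * s - 2)) ≤
          (1 / 4) * (1 + s) * (x * y ^ (2 * s + 1)) := by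
        have : x ^ 2 * (y ^ (2 * s - 2) * y ^ 2) ≤ x * (y * y ^ (2 * s)) := by
          rw [e2]
          have : x * x ≤ x * y := by nlinarith
          calc x ^ 2 * y ^ (2 * s) = (x * x) * y ^ (2 * s) := by ring
            _ ≤ (x * y) * y ^ (2 * s) := by
                exact mul_le_mul_of_nonneg_right this hys
            _ = x * (y * y ^ (2 * s)) := by ring
        rw [e3] at this
        nlinarith [mul_le_mul_of_nonneg_left this (show (0:ℝ) ≤ (1 + s) / 4 from by linarith)]
      have hx2s : 0 ≤ x ^ (2 * s + 1) := Real.rpow_nonneg hx.le _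
      calc (1 / 4) * x ^ 2 * y ^ 2 * ((y ^ (2 * s) - x ^ (2 * s)) / (y ^ 2 - x ^ 2))
          ≤ (1 / 4) * x ^ 2 * y ^ 2 * ((1 + s) * y ^ (2 * s - 2)) := step1
        _ ≤ (1 / 4) * (1 + s) * (x * y ^ (2 * s + 1)) := step2
        _ ≤ (1 / 4) * (1 + s) * (x * y ^ (2 * s + 1) + x ^ (2 * s + 1) * y) := by
            have h0 : (0:ℝ) ≤ (1 + s) * (x ^ (2 * s + 1) * y) :=
              mul_nonneg (by linarith) (mul_nonneg hx2s hy.le)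
            nlinarith [h0]
    rw [if_neg hab]
    rcases lt_or_gt_of_ne hab with h | h
    · exact main a b ha0 h
    · have := main b a hb0 h
      have hfrac : (a ^ (2 * s) - b ^ (2 * s)) / (a ^ 2 - b ^ 2) =
          (b ^ (2 * s) - a ^ (2 * s)) / (b ^ 2 - a ^ 2) := by
        rw [← neg_div_neg_eq]; ring_nf
      calc |(1 / 4) * a ^ 2 * b ^ 2 * ((a ^ (2 * s) - b ^ (2 * s)) / (a ^ 2 - b ^ 2))|
          = |(1 / 4) * b ^ 2 * a ^ 2 * ((b ^ (2 * s) - a ^ (2 * s)) / (b ^ 2 - a ^ 2))| := by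
            rw [hfrac]; ring_nf
        _ ≤ (1 / 4) * (1 + s) * (b * a ^ (2 * s + 1) + b ^ (2 * s + 1) * a) := this
        _ = (1 / 4) * (1 + s) * (a * b ^ (2 * s + 1) + a ^ (2 * s + 1) * b) := by ring

/-- The `c`-term estimate: with
`c(ξ₁,ξ₂) = (1/4)|ξ₁|²|ξ₂|²(|ξ₁|^{2s} - |ξ₂|^{2s})/(|ξ₁|² - |ξ₂|²)`
(diagonal interpreted as the derivative value), for measurable `φ` integrable against
the weights `|ξ|` and `|ξ|^{2s+1}`,
`|∬ c φ(ξ₁) φ(ξ₂)| ≤ (1/2)(1+s)(∫|ξ||φ|)(∫|ξ|^{2s+1}|φ|)`. -/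
theorem stmt15 (n : ℕ) (s : ℝ) (hs : 0 ≤ s)
    (φ : EuclideanSpace ℝ (Fin n) → ℝ) (hφ : Measurable φ)
    (hφ1 : Integrable (fun ξ => ‖ξ‖ * |φ ξ|) volume)
    (hφ2 : Integrable (fun ξ => ‖ξ‖ ^ (2 * s + 1) * |φ ξ|) volume) :
    |∫ ξ₁, ∫ ξ₂,
        ((1 / 4) * ‖ξ₁‖ ^ 2 * ‖ξ₂‖ ^ 2 *
          (if ‖ξ₁‖ = ‖ξ₂‖ then s * ‖ξ₂‖ ^ (2 * s - 2)
            else (‖ξ₁‖ ^ (2 * s) - ‖ξ₂‖ ^ (2 * s)) / (‖ξ₁‖ ^ 2 - ‖ξ₂‖ ^ 2)))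
          * φ ξ₁ * φ ξ₂|
      ≤ (1 / 2) * (1 + s) *
        ((∫ ξ, ‖ξ‖ * |φ ξ|) * (∫ ξ, ‖ξ‖ ^ (2 * s + 1) * |φ ξ|)) := by
  set I1 := ∫ ξ : EuclideanSpace ℝ (Fin n), ‖ξ‖ * |φ ξ| with hI1
  set I2 := ∫ ξ : EuclideanSpace ℝ (Fin n), ‖ξ‖ ^ (2 * s + 1) * |φ ξ| with hI2
  set K : EuclideanSpace ℝ (Fin n) → EuclideanSpace ℝ (Fin n) → ℝ := fun ξ₁ ξ₂ =>
    (1 / 4) * ‖ξ₁‖ ^ 2 * ‖ξ₂‖ ^ 2 *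
      (if ‖ξ₁‖ = ‖ξ₂‖ then s * ‖ξ₂‖ ^ (2 * s - 2)
        else (‖ξ₁‖ ^ (2 * s) - ‖ξ₂‖ ^ (2 * s)) / (‖ξ₁‖ ^ 2 - ‖ξ₂‖ ^ 2)) with hK
  -- inner bound
  have inner : ∀ ξ₁ : EuclideanSpace ℝ (Fin n),
      |∫ ξ₂, K ξ₁ ξ₂ * φ ξ₁ * φ ξ₂| ≤
        (1 / 4) * (1 + s) * I2 * (‖ξ₁‖ * |φ ξ₁|) +
        (1 / 4) * (1 + s) * I1 * (‖ξ₁‖ ^ (2 * s + 1) * |φ ξ₁|) := by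
    intro ξ₁
    have hpt : ∀ ξ₂ : EuclideanSpace ℝ (Fin n),
        |K ξ₁ ξ₂ * φ ξ₁ * φ ξ₂| ≤
          (1 / 4) * (1 + s) * (‖ξ₁‖ * |φ ξ₁|) * (‖ξ₂‖ ^ (2 * s + 1) * |φ ξ₂|) +
          (1 / 4) * (1 + s) * (‖ξ₁‖ ^ (2 * s + 1) * |φ ξ₁|) * (‖ξ₂‖ * |φ ξ₂|) := by
      intro ξ₂
      have h := kbd s hs ‖ξ₁‖ ‖ξ₂‖ (norm_nonneg _) (norm_nonneg _)
      calc |K ξ₁ ξ₂ * φ ξ₁ * φ ξ₂| = |K ξ₁ ξ₂| * |φ ξ₁| * |φ ξ₂| := by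
            rw [abs_mul, abs_mul]
        _ ≤ (1 / 4) * (1 + s) * (‖ξ₁‖ * ‖ξ₂‖ ^ (2 * s + 1) + ‖ξ₁‖ ^ (2 * s + 1) * ‖ξ₂‖)
              * |φ ξ₁| * |φ ξ₂| := by
            have h1 : (0:ℝ) ≤ |φ ξ₁| := abs_nonneg _
            have h2 : (0:ℝ) ≤ |φ ξ₂| := abs_nonneg _
            exact mul_le_mul_of_nonneg_right (mul_le_mul_of_nonneg_right h h1) h2
        _ = (1 / 4) * (1 + s) * (‖ξ₁‖ * |φ ξ₁|) * (‖ξ₂‖ ^ (2 * s + 1) * |φ ξ₂|) +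
            (1 / 4) * (1 + s) * (‖ξ₁‖ ^ (2 * s + 1) * |φ ξ₁|) * (‖ξ₂‖ * |φ ξ₂|) := by ring
    have hgint : Integrable (fun ξ₂ : EuclideanSpace ℝ (Fin n) =>
        (1 / 4) * (1 + s) * (‖ξ₁‖ * |φ ξ₁|) * (‖ξ₂‖ ^ (2 * s + 1) * |φ ξ₂|) +
        (1 / 4) * (1 + s) * (‖ξ₁‖ ^ (2 * s + 1) * |φ ξ₁|) * (‖ξ₂‖ * |φ ξ₂|)) volume :=
      (hφ2.const_mul _).add (hφ1.const_mul _)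
    calc |∫ ξ₂, K ξ₁ ξ₂ * φ ξ₁ * φ ξ₂| ≤ ∫ ξ₂, |K ξ₁ ξ₂ * φ ξ₁ * φ ξ₂| := by
          have := norm_integral_le_integral_norm (μ := volume)
            (fun ξ₂ => K ξ₁ ξ₂ * φ ξ₁ * φ ξ₂)
          simpa only [Real.norm_eq_abs] using this
      _ ≤ ∫ ξ₂, ((1 / 4) * (1 + s) * (‖ξ₁‖ * |φ ξ₁|) * (‖ξ₂‖ ^ (2 * s + 1) * |φ ξ₂|) +
            (1 / 4) * (1 + s) * (‖ξ₁‖ ^ (2 * s + 1) * |φ ξ₁|) * (‖ξ₂‖ * |φ ξ₂|)) :=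
          integral_mono_of_nonneg (Filter.Eventually.of_forall fun ξ₂ => abs_nonneg _)
            hgint (Filter.Eventually.of_forall hpt)
      _ = (1 / 4) * (1 + s) * I2 * (‖ξ₁‖ * |φ ξ₁|) +
          (1 / 4) * (1 + s) * I1 * (‖ξ₁‖ ^ (2 * s + 1) * |φ ξ₁|) := by
          rw [integral_add (hφ2.const_mul _) (hφ1.const_mul _),
            integral_const_mul, integral_const_mul, ← hI1, ← hI2]
          ring
  have hGint : Integrable (fun ξ₁ : EuclideanSpace ℝ (Fin n) =>
      (1 / 4) * (1 + s) * I2 * (‖ξ₁‖ * |φ ξ₁|) +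
      (1 / 4) * (1 + s) * I1 * (‖ξ₁‖ ^ (2 * s + 1) * |φ ξ₁|)) volume :=
    (hφ1.const_mul _).add (hφ2.const_mul _)
  calc |∫ ξ₁, ∫ ξ₂, K ξ₁ ξ₂ * φ ξ₁ * φ ξ₂|
      ≤ ∫ ξ₁, |∫ ξ₂, K ξ₁ ξ₂ * φ ξ₁ * φ ξ₂| := by
        have := norm_integral_le_integral_norm (μ := volume)
          (fun ξ₁ => ∫ ξ₂, K ξ₁ ξ₂ * φ ξ₁ * φ ξ₂)
        simpa only [Real.norm_eq_abs] using this
    _ ≤ ∫ ξ₁, ((1 / 4) * (1 + s) * I2 * (‖ξ₁‖ * |φ ξ₁|) +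
          (1 / 4) * (1 + s) * I1 * (‖ξ₁‖ ^ (2 * s + 1) * |φ ξ₁|)) :=
        integral_mono_of_nonneg (Filter.Eventually.of_forall fun ξ₁ => abs_nonneg _)
          hGint (Filter.Eventually.of_forall inner)
    _ = (1 / 2) * (1 + s) * (I1 * I2) := by
        rw [integral_add (hφ1.const_mul _) (hφ2.const_mul _),
          integral_const_mul, integral_const_mul, ← hI1, ← hI2]
        ring
end
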